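/- arXiv:1511.06017 — 4 statements merged into one kernel-verified Lean document; each statement's English description precedes it below -/
import Mathlib

section
/- Sufficient optimality conditions for the regularized pricing problem: if \bar{q} \in U(G\bar{w}), \bar{q}' \in S(G\bar{w}), and G^T(\bar{q} - \bar{q}') = \lambda \bar{w}, then \bar{w} minimizes w \mapsto u(Gw; v) + s(Gw) + (\lambda/2)\|w\|_2^2 and (\bar{q}, \bar{q}') maximizes (q, q') \mapsto v^T q - (1/(2\lambda))\|G^T(q - q')\|_2^2 over H \times F. -/
open Matrix Finset

lemma dot_self_nonneg' {n : ℕ} (x : Fin n → ℝ) : 0 ≤ x ⬝ᵥ x :=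
  Finset.sum_nonneg fun i _ => mul_self_nonneg _

lemma sum_sq_eq_dot' {n : ℕ} (x : Fin n → ℝ) : ∑ j, (x j) ^ 2 = x ⬝ᵥ x := by
  simp [dotProduct, sq]

lemma cont_dot' {n : ℕ} (p : Fin n → ℝ) :
    Continuous fun q : Fin n → ℝ => p ⬝ᵥ q := by
  unfold dotProduct
  exact continuous_finset_sum _ fun i _ => continuous_const.mul (continuous_apply i)

/-- Sufficient optimality conditions for the regularized pricing problem:
if `q̄ ∈ U(Gw̄)`, `q̄' ∈ S(Gw̄)`, and `Gᵀ(q̄ - q̄') = λ w̄`, then `w̄` minimizes the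
regularized primal objective and `(q̄, q̄')` maximizes the regularized dual over `H × F`. -/
theorem stmt_5 {N d : ℕ} (H F : Set (Fin N → ℝ)) (v : Fin N → ℝ)
    (G : Matrix (Fin N) (Fin d) ℝ) (lam : ℝ) (hlam : 0 < lam)
    (hHcpt : IsCompact H) (hHconv : Convex ℝ H)
    (hFcpt : IsCompact F) (hFconv : Convex ℝ F)
    (u s : (Fin N → ℝ) → ℝ)
    (hu : ∀ p, u p = sSup ((fun q => (v - p) ⬝ᵥ q) '' H))
    (hs : ∀ p, s p = sSup ((fun q => p ⬝ᵥ q) '' F))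
    (wbar : Fin d → ℝ) (qbar qbar' : Fin N → ℝ)
    (hqH : qbar ∈ H) (hqF : qbar' ∈ F)
    (hqU : ∀ q ∈ H, (v - G.mulVec wbar) ⬝ᵥ q ≤ (v - G.mulVec wbar) ⬝ᵥ qbar)
    (hqS : ∀ q ∈ F, (G.mulVec wbar) ⬝ᵥ q ≤ (G.mulVec wbar) ⬝ᵥ qbar')
    (hcomp : Gᵀ.mulVec (qbar - qbar') = lam • wbar) :
    (∀ w : Fin d → ℝ,
        u (G.mulVec wbar) + s (G.mulVec wbar) + (lam / 2) * ∑ j, (wbar j) ^ 2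
          ≤ u (G.mulVec w) + s (G.mulVec w) + (lam / 2) * ∑ j, (w j) ^ 2) ∧
    (∀ q ∈ H, ∀ q' ∈ F,
        v ⬝ᵥ q - (1 / (2 * lam)) * ∑ j, (Gᵀ.mulVec (q - q') j) ^ 2
          ≤ v ⬝ᵥ qbar - (1 / (2 * lam)) * ∑ j, (Gᵀ.mulVec (qbar - qbar') j) ^ 2) := by
  set p := G.mulVec wbar with hp
  -- transpose/dot fact
  have hmv : ∀ (x : Fin N → ℝ) (w : Fin d → ℝ),
      Gᵀ.mulVec x ⬝ᵥ w = x ⬝ᵥ G.mulVec w := by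
    intro x w
    rw [Matrix.mulVec_transpose, ← Matrix.dotProduct_mulVec]
  -- complementarity facts
  have hc : ∀ w : Fin d → ℝ, (qbar - qbar') ⬝ᵥ G.mulVec w = lam * (wbar ⬝ᵥ w) := by
    intro w
    rw [← hmv, hcomp, smul_dotProduct, smul_eq_mul]
  -- exact values of u and s at p
  have hup : u p = (v - p) ⬝ᵥ qbar := by
    rw [hu]
    apply le_antisymm
    · refine csSup_le ⟨_, ⟨qbar, hqH, rfl⟩⟩ ?_
      rintro x ⟨q, hq, rfl⟩
      exact hqU q hq
    · exact le_csSup (hHcpt.image (cont_dot' _)).bddAbove ⟨qbar, hqH, rfl⟩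
  have hsp : s p = p ⬝ᵥ qbar' := by
    rw [hs]
    apply le_antisymm
    · refine csSup_le ⟨_, ⟨qbar', hqF, rfl⟩⟩ ?_
      rintro x ⟨q, hq, rfl⟩
      exact hqS q hq
    · exact le_csSup (hFcpt.image (cont_dot' _)).bddAbove ⟨qbar', hqF, rfl⟩
  constructor
  · intro w
    have h1 : (v - G.mulVec w) ⬝ᵥ qbar ≤ u (G.mulVec w) := by
      rw [hu]
      exact le_csSup (hHcpt.image (cont_dot' _)).bddAbove ⟨qbar, hqH, rfl⟩
    have h2 : (G.mulVec w) ⬝ᵥ qbar' ≤ s (G.mulVec w) := by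
      rw [hs]
      exact le_csSup (hFcpt.image (cont_dot' _)).bddAbove ⟨qbar', hqF, rfl⟩
    have quad : 0 ≤ (w - wbar) ⬝ᵥ (w - wbar) := dot_self_nonneg' _
    have hexp : (w - wbar) ⬝ᵥ (w - wbar)
        = w ⬝ᵥ w - 2 * (wbar ⬝ᵥ w) + wbar ⬝ᵥ wbar := by
      rw [sub_dotProduct, dotProduct_sub, dotProduct_sub,
        dotProduct_comm w wbar]
      ring
    have hcw : (qbar - qbar') ⬝ᵥ G.mulVec w = lam * (wbar ⬝ᵥ w) := hc w
    have hcwb : (qbar - qbar') ⬝ᵥ p = lam * (wbar ⬝ᵥ wbar) := hc wbar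
    rw [hup, hsp, sum_sq_eq_dot', sum_sq_eq_dot']
    have e1 : (v - p) ⬝ᵥ qbar = v ⬝ᵥ qbar - p ⬝ᵥ qbar := sub_dotProduct _ _ _
    have e2 : (v - G.mulVec w) ⬝ᵥ qbar = v ⬝ᵥ qbar - (G.mulVec w) ⬝ᵥ qbar :=
      sub_dotProduct _ _ _
    have e3 : (qbar - qbar') ⬝ᵥ G.mulVec w
        = (G.mulVec w) ⬝ᵥ qbar - (G.mulVec w) ⬝ᵥ qbar' := by
      rw [sub_dotProduct, dotProduct_comm, dotProduct_comm qbar']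
    have e4 : (qbar - qbar') ⬝ᵥ p = p ⬝ᵥ qbar - p ⬝ᵥ qbar' := by
      rw [sub_dotProduct, dotProduct_comm, dotProduct_comm qbar']
    nlinarith [h1, h2]
  · intro q hq q' hq'
    set x := Gᵀ.mulVec (q - q') with hx
    have hU : (v - p) ⬝ᵥ q ≤ (v - p) ⬝ᵥ qbar := hqU q hq
    have hS : p ⬝ᵥ q' ≤ p ⬝ᵥ qbar' := hqS q' hq'
    have hFen : 0 ≤ (x - lam • wbar) ⬝ᵥ (x - lam • wbar) := dot_self_nonneg' _
    have hexp2 : (x - lam • wbar) ⬝ᵥ (x - lam • wbar)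
        = x ⬝ᵥ x - 2 * lam * (wbar ⬝ᵥ x) + lam ^ 2 * (wbar ⬝ᵥ wbar) := by
      rw [sub_dotProduct, dotProduct_sub, dotProduct_sub,
        smul_dotProduct, dotProduct_smul, smul_dotProduct,
        dotProduct_smul, dotProduct_comm x wbar]
      simp [smul_eq_mul]
      ring
    have hxw : x ⬝ᵥ wbar = (q - q') ⬝ᵥ p := hmv (q - q') wbar
    have hxw' : wbar ⬝ᵥ x = (q - q') ⬝ᵥ p := by rw [dotProduct_comm]; exact hxw
    have hqqp : (q - q') ⬝ᵥ p = p ⬝ᵥ q - p ⬝ᵥ q' := by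
      rw [sub_dotProduct, dotProduct_comm, dotProduct_comm q']
    have hcb : p ⬝ᵥ qbar - p ⬝ᵥ qbar' = lam * (wbar ⬝ᵥ wbar) := by
      have := hc wbar
      rw [sub_dotProduct, dotProduct_comm, dotProduct_comm qbar'] at this
      linarith
    have key : wbar ⬝ᵥ x - lam / 2 * (wbar ⬝ᵥ wbar) ≤ 1 / (2 * lam) * (x ⬝ᵥ x) := by
      rw [← sub_nonneg]
      have heq : 1 / (2 * lam) * (x ⬝ᵥ x) - (wbar ⬝ᵥ x - lam / 2 * (wbar ⬝ᵥ wbar))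
          = 1 / (2 * lam) * ((x - lam • wbar) ⬝ᵥ (x - lam • wbar)) := by
        rw [hexp2]; field_simp; ring
      rw [heq]
      exact mul_nonneg (by positivity) hFen
    have hrhs : ∑ j, (Gᵀ.mulVec (qbar - qbar') j) ^ 2 = lam ^ 2 * (wbar ⬝ᵥ wbar) := by
      rw [sum_sq_eq_dot', hcomp, smul_dotProduct, dotProduct_smul]
      simp [smul_eq_mul]; ring
    rw [hrhs, sum_sq_eq_dot' x]
    have eU : (v - p) ⬝ᵥ q = v ⬝ᵥ q - p ⬝ᵥ q := sub_dotProduct _ _ _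
    have eUb : (v - p) ⬝ᵥ qbar = v ⬝ᵥ qbar - p ⬝ᵥ qbar := sub_dotProduct _ _ _
    have hl2 : 1 / (2 * lam) * (lam ^ 2 * (wbar ⬝ᵥ wbar)) = lam / 2 * (wbar ⬝ᵥ wbar) := by
      field_simp
    rw [hl2]
    nlinarith [key, hU, hS]
end

section
/- The function h(w) = u(Gw; v) + s(Gw) + (\lambda/2)\|w\|_2^2 attains a minimum on \mathbb{R}^d, for any \lambda \geq 0. -/
/-!
Write `σ_K(x) = sup_{q ∈ K} x ⬝ q` for the support function of a compact set `K`, so that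
`u(p) = σ_H(v - p)` and `s(p) = σ_F(p)`. Both are continuous, and since `H` and `F` contain `0` and
every basis vector, `f = u + s` is nonnegative and satisfies `|pᵢ| ≤ f(p) + |vᵢ|`; thus `f` is
coercive on `ℝᴺ`. For `λ > 0` the regularizer alone makes `h` coercive on `ℝᵈ`. For `λ = 0` we
minimize the coercive `f` over the closed subspace `range G` instead, and pull the minimizer back.
-/

open Matrix Finset Filter Topology

section SupportFunction

variable {n : Type*} [Fintype n]

noncomputable def supportFun (K : Set (n → ℝ)) (x : n → ℝ) : ℝ :=
  sSup ((fun q => x ⬝ᵥ q) '' K)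

variable {K : Set (n → ℝ)}

theorem continuous_supportFun (hK : IsCompact K) : Continuous (supportFun K) :=
  hK.continuous_sSup (by simp only [dotProduct]; fun_prop)

theorem dotProduct_le_supportFun (hK : IsCompact K) (x : n → ℝ) {q : n → ℝ} (hq : q ∈ K) :
    x ⬝ᵥ q ≤ supportFun K x :=
  le_csSup ((hK.image (by simp only [dotProduct]; fun_prop)).bddAbove) ⟨q, hq, rfl⟩

theorem supportFun_nonneg (hK : IsCompact K) (hK0 : 0 ∈ K) (x : n → ℝ) :
    0 ≤ supportFun K x := by
  simpa using dotProduct_le_supportFun hK x hK0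

theorem apply_le_supportFun [DecidableEq n] (hK : IsCompact K) {i : n}
    (hKi : Pi.single i 1 ∈ K) (x : n → ℝ) : x i ≤ supportFun K x := by
  simpa using dotProduct_le_supportFun hK x hKi

end SupportFunction

section Coercive

variable {n : Type*} [Fintype n] [DecidableEq n] {H F : Set (n → ℝ)}

theorem abs_apply_le_supportFun_add (hH : IsCompact H) (hH0 : 0 ∈ H)
    (hHbasis : ∀ i, Pi.single i 1 ∈ H) (hF : IsCompact F) (hF0 : 0 ∈ F)
    (hFbasis : ∀ i, Pi.single i 1 ∈ F) (v p : n → ℝ) (i : n) :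
    |p i| ≤ supportFun H (v - p) + supportFun F p + |v i| := by
  have hu := apply_le_supportFun hH (hHbasis i) (v - p)
  have hs := apply_le_supportFun hF (hFbasis i) p
  have hu0 := supportFun_nonneg hH hH0 (v - p)
  have hs0 := supportFun_nonneg hF hF0 p
  rw [Pi.sub_apply] at hu
  cases abs_cases (p i) <;> cases abs_cases (v i) <;> linarith

theorem norm_le_supportFun_add (hH : IsCompact H) (hH0 : 0 ∈ H)
    (hHbasis : ∀ i, Pi.single i 1 ∈ H) (hF : IsCompact F) (hF0 : 0 ∈ F)
    (hFbasis : ∀ i, Pi.single i 1 ∈ F) (v p : n → ℝ) :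
    ‖p‖ ≤ supportFun H (v - p) + supportFun F p + ‖v‖ := by
  have hu0 := supportFun_nonneg hH hH0 (v - p)
  have hs0 := supportFun_nonneg hF hF0 p
  refine (pi_norm_le_iff_of_nonneg (by positivity)).2 fun i => ?_
  calc ‖p i‖ = |p i| := rfl
    _ ≤ supportFun H (v - p) + supportFun F p + |v i| :=
      abs_apply_le_supportFun_add hH hH0 hHbasis hF hF0 hFbasis v p i
    _ ≤ _ := by gcongr; exact norm_le_pi_norm v i

theorem tendsto_supportFun_add_cocompact (hH : IsCompact H) (hH0 : 0 ∈ H)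
    (hHbasis : ∀ i, Pi.single i 1 ∈ H) (hF : IsCompact F) (hF0 : 0 ∈ F)
    (hFbasis : ∀ i, Pi.single i 1 ∈ F) (v : n → ℝ) :
    Tendsto (fun p => supportFun H (v - p) + supportFun F p) (cocompact _) atTop :=
  tendsto_atTop_mono
    (fun p => by linarith [norm_le_supportFun_add hH hH0 hHbasis hF hF0 hFbasis v p])
    (tendsto_atTop_add_const_right _ (-‖v‖) (tendsto_norm_cocompact_atTop (E := n → ℝ)))

end Coercive

theorem sq_norm_le_sum_sq {d : Type*} [Fintype d] (w : d → ℝ) : ‖w‖ ^ 2 ≤ ∑ j, w j ^ 2 := by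
  rw [← Real.sqrt_le_sqrt_iff (by positivity), Real.sqrt_sq (norm_nonneg w)]
  refine (pi_norm_le_iff_of_nonneg (Real.sqrt_nonneg _)).2 fun j => ?_
  rw [Real.norm_eq_abs, ← Real.sqrt_sq_eq_abs]
  exact Real.sqrt_le_sqrt (single_le_sum (fun i _ => sq_nonneg (w i)) (mem_univ j))

theorem tendsto_sum_sq_cocompact {d : Type*} [Fintype d] :
    Tendsto (fun w : d → ℝ => ∑ j, w j ^ 2) (cocompact _) atTop :=
  tendsto_atTop_mono sq_norm_le_sum_sq
    ((tendsto_pow_atTop two_ne_zero).comp tendsto_norm_cocompact_atTop)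

theorem exists_forall_le_comp_linearMap {E F : Type*} [NormedAddCommGroup E] [NormedSpace ℝ E]
    [FiniteDimensional ℝ E] [NormedAddCommGroup F] [NormedSpace ℝ F] [FiniteDimensional ℝ F]
    {g : F → ℝ} (hg : Continuous g) (hlim : Tendsto g (cocompact F) atTop) (L : E →ₗ[ℝ] F) :
    ∃ x, ∀ y, g (L x) ≤ g (L y) := by
  obtain ⟨_, ⟨x, rfl⟩, hmin⟩ := hg.continuousOn.exists_isMinOn'
    (LinearMap.range L).closed_of_finiteDimensional (LinearMap.range L).zero_mem
    (Eventually.filter_mono inf_le_left (hlim.eventually (eventually_ge_atTop (g 0))))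
  exact ⟨x, fun y => hmin ⟨y, rfl⟩⟩

theorem stmt_7_general {N d : ℕ} (H F : Set (Fin N → ℝ)) (v : Fin N → ℝ)
    (G : Matrix (Fin N) (Fin d) ℝ) (lam : ℝ) (hlam : 0 ≤ lam)
    (hHcpt : IsCompact H)
    (hH0 : (0 : Fin N → ℝ) ∈ H)
    (hHbasis : ∀ i : Fin N, (Pi.single i 1 : Fin N → ℝ) ∈ H)
    (hFcpt : IsCompact F)
    (hF0 : (0 : Fin N → ℝ) ∈ F)
    (hFbasis : ∀ i : Fin N, (Pi.single i 1 : Fin N → ℝ) ∈ F)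
    (u s : (Fin N → ℝ) → ℝ)
    (hu : ∀ p, u p = sSup ((fun q => (v - p) ⬝ᵥ q) '' H))
    (hs : ∀ p, s p = sSup ((fun q => p ⬝ᵥ q) '' F))
    (h : (Fin d → ℝ) → ℝ)
    (hh : ∀ w, h w = u (G.mulVec w) + s (G.mulVec w) + (lam / 2) * ∑ j, (w j) ^ 2) :
    ∃ wbar : Fin d → ℝ, ∀ w : Fin d → ℝ, h wbar ≤ h w := by
  set f : (Fin N → ℝ) → ℝ := fun p => supportFun H (v - p) + supportFun F p
  have hf_cont : Continuous f :=
    ((continuous_supportFun hHcpt).comp (continuous_const.sub continuous_id)).add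
      (continuous_supportFun hFcpt)
  have hf_lim : Tendsto f (cocompact _) atTop :=
    tendsto_supportFun_add_cocompact hHcpt hH0 hHbasis hFcpt hF0 hFbasis v
  have hh_eq : h = fun w => f (G *ᵥ w) + lam / 2 * ∑ j, w j ^ 2 := by
    funext w; rw [hh, hu, hs]; rfl
  subst hh_eq
  rcases hlam.eq_or_lt with rfl | hlam_pos
  · simpa using exists_forall_le_comp_linearMap hf_cont hf_lim G.mulVecLin
  · have hf0 (p) : 0 ≤ f p :=
      add_nonneg (supportFun_nonneg hHcpt hH0 _) (supportFun_nonneg hFcpt hF0 p)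
    exact Continuous.exists_forall_le (by fun_prop)
      (tendsto_atTop_mono (fun w => le_add_of_nonneg_left (hf0 _))
        (tendsto_sum_sq_cocompact.const_mul_atTop (half_pos hlam_pos)))

/-- The regularized pricing objective `h(w) = u(Gw;v) + s(Gw) + (λ/2)‖w‖₂²`
attains a minimum on `ℝ^d`, for any `λ ≥ 0`. -/
theorem stmt_7 {N d : ℕ} [NeZero N] (H F : Set (Fin N → ℝ)) (v : Fin N → ℝ)
    (G : Matrix (Fin N) (Fin d) ℝ) (lam : ℝ) (hlam : 0 ≤ lam)
    (hHne : H.Nonempty) (hHcpt : IsCompact H) (hHconv : Convex ℝ H)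
    (hH0 : (0 : Fin N → ℝ) ∈ H)
    (hHbasis : ∀ i : Fin N, (Pi.single i 1 : Fin N → ℝ) ∈ H)
    (hFne : F.Nonempty) (hFcpt : IsCompact F) (hFconv : Convex ℝ F)
    (hF0 : (0 : Fin N → ℝ) ∈ F)
    (hFbasis : ∀ i : Fin N, (Pi.single i 1 : Fin N → ℝ) ∈ F)
    (u s : (Fin N → ℝ) → ℝ)
    (hu : ∀ p, u p = sSup ((fun q => (v - p) ⬝ᵥ q) '' H))
    (hs : ∀ p, s p = sSup ((fun q => p ⬝ᵥ q) '' F))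
    (h : (Fin d → ℝ) → ℝ)
    (hh : ∀ w, h w = u (G.mulVec w) + s (G.mulVec w) + (lam / 2) * ∑ j, (w j) ^ 2) :
    ∃ wbar : Fin d → ℝ, ∀ w : Fin d → ℝ, h wbar ≤ h w :=
  stmt_7_general H F v G lam hlam hHcpt hH0 hHbasis hFcpt hF0 hFbasis u s hu hs h hh
end

section
/- Level set bound for bundle pricing: if G is the identity matrix (bundle prices p = w) and h(w) = u(w; v) + s(w) + (\lambda/2)\|w\|_2^2 satisfies h(w) \leq h(0), then \|w\|_\infty \leq (n+1)V where V = \|v\|_\infty and n bounds the sum of coordinates of any q \in H (so that u(0; v) \leq nV). -/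
open Matrix Finset

/-- Level set bound for bundle pricing (`G = id`, prices `p = w`): if
`h(w) = u(w;v) + s(w) + (λ/2)‖w‖₂²` satisfies `h(w) ≤ h(0)`, then
`‖w‖∞ ≤ (n+1)V` where `V = ‖v‖∞` and `∑ᵢ qᵢ ≤ n` for all `q ∈ H`. -/
theorem stmt_9 {N : ℕ} [NeZero N] (H F : Set (Fin N → ℝ)) (v : Fin N → ℝ)
    (n : ℕ) (lam : ℝ) (hlam : 0 ≤ lam)
    (hHne : H.Nonempty) (hHcpt : IsCompact H) (hHconv : Convex ℝ H)
    (hH0 : (0 : Fin N → ℝ) ∈ H)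
    (hHbasis : ∀ i : Fin N, (Pi.single i 1 : Fin N → ℝ) ∈ H)
    (hHpos : ∀ q ∈ H, ∀ i, 0 ≤ q i)
    (hHsum : ∀ q ∈ H, ∑ i, q i ≤ (n : ℝ))
    (hFne : F.Nonempty) (hFcpt : IsCompact F) (hFconv : Convex ℝ F)
    (hF0 : (0 : Fin N → ℝ) ∈ F)
    (hFbasis : ∀ i : Fin N, (Pi.single i 1 : Fin N → ℝ) ∈ F)
    (u s : (Fin N → ℝ) → ℝ)
    (hu : ∀ p, u p = sSup ((fun q => (v - p) ⬝ᵥ q) '' H))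
    (hs : ∀ p, s p = sSup ((fun q => p ⬝ᵥ q) '' F))
    (h : (Fin N → ℝ) → ℝ)
    (hh : ∀ w, h w = u w + s w + (lam / 2) * ∑ i, (w i) ^ 2)
    (w : Fin N → ℝ) (hlev : h w ≤ h 0) :
    ‖w‖ ≤ ((n : ℝ) + 1) * ‖v‖ := by

  have hVnn : (0:ℝ) ≤ ‖v‖ := norm_nonneg v
  have hcont : ∀ a : Fin N → ℝ, Continuous fun q : Fin N → ℝ => a ⬝ᵥ q := by
    intro a
    unfold dotProduct
    exact continuous_finset_sum _ fun i _ => continuous_const.mul (continuous_apply i)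
  have hbddH : ∀ a : Fin N → ℝ, BddAbove ((fun q => a ⬝ᵥ q) '' H) :=
    fun a => (hHcpt.image (hcont a)).bddAbove
  have hbddF : ∀ a : Fin N → ℝ, BddAbove ((fun q => a ⬝ᵥ q) '' F) :=
    fun a => (hFcpt.image (hcont a)).bddAbove
  -- lower bounds for u w
  have huw0 : 0 ≤ u w := by
    rw [hu]
    have h0 : (0:ℝ) = (v - w) ⬝ᵥ (0 : Fin N → ℝ) := by simp
    rw [h0]
    exact le_csSup (hbddH _) (Set.mem_image_of_mem _ hH0)
  have huwi : ∀ i, v i - w i ≤ u w := by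
    intro i
    rw [hu]
    have h1 : v i - w i = (v - w) ⬝ᵥ (Pi.single i 1 : Fin N → ℝ) := by
      simp [dotProduct, Pi.single_apply, Finset.sum_ite_eq']
    rw [h1]
    exact le_csSup (hbddH _) (Set.mem_image_of_mem _ (hHbasis i))
  have hsw0 : 0 ≤ s w := by
    rw [hs]
    have h0 : (0:ℝ) = w ⬝ᵥ (0 : Fin N → ℝ) := by simp
    rw [h0]
    exact le_csSup (hbddF _) (Set.mem_image_of_mem _ hF0)
  have hswi : ∀ i, w i ≤ s w := by
    intro i
    rw [hs]
    have h1 : w i = w ⬝ᵥ (Pi.single i 1 : Fin N → ℝ) := by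
      simp [dotProduct, Pi.single_apply, Finset.sum_ite_eq']
    rw [h1]
    exact le_csSup (hbddF _) (Set.mem_image_of_mem _ (hFbasis i))
  -- s 0 = 0
  have hs0 : s 0 = 0 := by
    rw [hs]
    have himg : ((fun q : Fin N → ℝ => (0 : Fin N → ℝ) ⬝ᵥ q) '' F) = {(0:ℝ)} := by
      have : (fun q : Fin N → ℝ => (0 : Fin N → ℝ) ⬝ᵥ q) = fun _ => (0:ℝ) := by
        funext q; simp
      rw [this]
      exact hFne.image_const 0
    rw [himg, csSup_singleton]
  -- u 0 ≤ n * ‖v‖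
  have hu0 : u 0 ≤ (n:ℝ) * ‖v‖ := by
    rw [hu]
    apply csSup_le ((hHne.image _))
    rintro x ⟨q, hq, rfl⟩
    have hq0 := hHpos q hq
    show (v - 0) ⬝ᵥ q ≤ (n:ℝ) * ‖v‖
    have hvq : (v - 0) ⬝ᵥ q = ∑ i, v i * q i := by simp [dotProduct]
    rw [hvq]
    calc ∑ i, v i * q i ≤ ∑ i, ‖v‖ * q i := by
          apply Finset.sum_le_sum
          intro i _
          exact mul_le_mul_of_nonneg_right
            (le_trans (le_abs_self _) ((Real.norm_eq_abs _) ▸ norm_le_pi_norm v i)) (hq0 i)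
      _ = ‖v‖ * ∑ i, q i := by rw [Finset.mul_sum]
      _ ≤ ‖v‖ * n := mul_le_mul_of_nonneg_left (hHsum q hq) hVnn
      _ = (n:ℝ) * ‖v‖ := mul_comm _ _
  have hlam2 : 0 ≤ (lam / 2) * ∑ i, (w i) ^ 2 := by
    apply mul_nonneg (by linarith) (Finset.sum_nonneg fun i _ => sq_nonneg _)
  have hh0 : h 0 ≤ (n:ℝ) * ‖v‖ := by
    rw [hh]
    simp only [Pi.zero_apply, hs0]
    have : ∑ i : Fin N, ((0:ℝ)) ^ 2 = 0 := by simp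
    rw [this]
    linarith
  have hhw : u w + s w + (lam / 2) * ∑ i, (w i) ^ 2 ≤ (n:ℝ) * ‖v‖ := by
    rw [← hh]; linarith [hlev, hh0]
  rw [pi_norm_le_iff_of_nonneg (by positivity)]
  intro i
  rw [Real.norm_eq_abs, abs_le]
  have hvi : |v i| ≤ ‖v‖ := (Real.norm_eq_abs _) ▸ norm_le_pi_norm v i
  have hvi1 : -‖v‖ ≤ v i := by cases abs_le.mp hvi; linarith
  constructor
  · have := huwi i
    linarith [hswi i, hsw0]
  · linarith [hswi i, huw0]
end

section
/- GARP implies rationalizability: if bids (b^t)_{t \in [T]} and prices (p^t)_{t \in [T]} satisfy the GARP condition \sum_{k=1}^{k'} (b^{t_{k+1}} - b^{t_k})^T p^{t_k} \geq 0 for every finite cycle of distinct rounds t_1, ..., t_{k'} (with t_{k'+1} = t_1), then the system of inequalities \zeta^t - p^{t\,T} b^t \geq \zeta^s - p^{t\,T} b^s for all s, t \in [T] has a solution (\zeta^t)_{t \in [T]}. -/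
/-!
Let `ζ v` be the least cost of a simple path ending at `v`. Given a cheapest simple path to
`t`, appending the edge `t → s` gives a walk to `s`; if it revisits `s`, the part after the
first visit is a cycle of distinct vertices, whose cost is nonnegative by GARP, so cutting it
off does not increase the cost. Hence `ζ s ≤ ζ t + c t s`, which for
`c t s = (bˢ - bᵗ)ᵀpᵗ` are the Afriat inequalities.
-/

open Matrix

section PathCost

variable {α : Type*} (c : α → α → ℝ)

def pathCost : List α → ℝ
  | [] => 0
  | [_] => 0
  | x :: y :: r => c x y + pathCost (y :: r)

def NonnegCycleCost : Prop :=
  ∀ (n : ℕ) [NeZero n] (v : Fin n → α), Function.Injective v →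
    0 ≤ ∑ k : Fin n, c (v k) (v (k + 1))

lemma pathCost_pair (x y : α) : pathCost c [x, y] = c x y := by
  simp [pathCost]

lemma pathCost_append_cons (x : α) (B : List α) :
    ∀ A : List α, pathCost c (A ++ x :: B) = pathCost c (A ++ [x]) + pathCost c (x :: B)
  | [] => by simp [pathCost]
  | [a] => by simp [pathCost]
  | a :: a' :: A => by
    simp only [List.cons_append, pathCost]
    rw [← List.cons_append, pathCost_append_cons x B (a' :: A), List.cons_append]
    ring

lemma pathCost_ofFn : ∀ {n : ℕ} (f : Fin (n + 1) → α),
    pathCost c (List.ofFn f) = ∑ k : Fin n, c (f k.castSucc) (f k.succ)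
  | 0, f => by simp [pathCost]
  | n + 1, f => by
    have htail : List.ofFn (fun i => f i.succ) = f 1 :: List.ofFn fun i => f i.succ.succ :=
      List.ofFn_succ
    rw [List.ofFn_succ (f := f), htail, pathCost, ← htail, pathCost_ofFn, Fin.sum_univ_succ]
    rfl

open Fin.NatCast in
lemma pathCost_ofFn_append_head {m : ℕ} [NeZero m] (v : Fin m → α) :
    pathCost c (List.ofFn v ++ [v 0]) = ∑ k : Fin m, c (v k) (v (k + 1)) := by
  have hwalk : List.ofFn (fun i : Fin (m + 1) => v ((i : ℕ) : Fin m)) = List.ofFn v ++ [v 0] := by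
    rw [List.ofFn_succ']
    simp
  rw [← hwalk, pathCost_ofFn]
  refine Finset.sum_congr rfl fun k _ => ?_
  simp [Fin.val_succ]

namespace NonnegCycleCost

variable {c}

lemma pathCost_cycle_nonneg (hc : NonnegCycleCost c) {a : α} {r : List α}
    (hnodup : (a :: r).Nodup) : 0 ≤ pathCost c (a :: r ++ [a]) := by
  have hcycle := hc (r.length + 1) (a :: r).get (List.nodup_iff_injective_get.mp hnodup)
  rwa [← pathCost_ofFn_append_head, List.ofFn_get] at hcycle

lemma exists_path_le (hc : NonnegCycleCost c) {l : List α} {t : α} (hl : (l ++ [t]).Nodup)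
    (s : α) :
    ∃ l' : List α, (l' ++ [s]).Nodup ∧ pathCost c (l' ++ [s]) ≤ pathCost c (l ++ [t]) + c t s := by
  have hextend : pathCost c (l ++ [t] ++ [s]) = pathCost c (l ++ [t]) + c t s := by
    rw [List.append_assoc, List.singleton_append, pathCost_append_cons, pathCost_pair]
  by_cases hs : s ∈ l ++ [t]
  · obtain ⟨l₁, l₂, hsplit⟩ := List.append_of_mem hs
    rw [hsplit] at hl hextend ⊢
    have hcycle := hc.pathCost_cycle_nonneg (hl.sublist (List.sublist_append_right l₁ _))
    refine ⟨l₁, hl.sublist (by simp), ?_⟩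
    rw [List.append_assoc, List.cons_append, pathCost_append_cons] at hextend
    rw [List.cons_append] at hcycle
    linarith
  · exact ⟨l ++ [t], List.concat_eq_append ▸ hl.concat hs, hextend.le⟩

theorem exists_potential [Finite α] (hc : NonnegCycleCost c) :
    ∃ ζ : α → ℝ, ∀ s t, ζ s ≤ ζ t + c t s := by
  have : Fintype α := Fintype.ofFinite α
  have hfinite (v : α) : {l : List α | (l ++ [v]).Nodup}.Finite :=
    (List.finite_length_le α (Fintype.card α)).subset fun l hl =>
      (hl.sublist (List.sublist_append_left l [v])).length_le_card
  choose path hpath hmin using fun v =>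
    Set.exists_min_image _ (fun l => pathCost c (l ++ [v])) (hfinite v) ⟨[], by simp⟩
  refine ⟨fun v => pathCost c (path v ++ [v]), fun s t => ?_⟩
  obtain ⟨l, hl, hle⟩ := hc.exists_path_le (hpath t) s
  exact (hmin s l hl).trans hle

end NonnegCycleCost

end PathCost

/-- GARP implies rationalizability: if bids and prices satisfy nonnegative cost on
every cycle of distinct rounds (with cyclic successor `k + 1` in `Fin k'`), then the
Afriat inequalities `ζᵗ - pᵗᵀbᵗ ≥ ζˢ - pᵗᵀbˢ` are feasible. -/
theorem stmt_18 {N T : ℕ} (b p : Fin T → Fin N → ℝ)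
    (hGARP : ∀ (k' : ℕ) [NeZero k'] (t : Fin k' → Fin T), Function.Injective t →
      0 ≤ ∑ k : Fin k', (b (t (k + 1)) - b (t k)) ⬝ᵥ p (t k)) :
    ∃ ζ : Fin T → ℝ, ∀ s t : Fin T,
      ζ s - p t ⬝ᵥ b s ≤ ζ t - p t ⬝ᵥ b t := by
  obtain ⟨ζ, hζ⟩ :=
    NonnegCycleCost.exists_potential (c := fun t s => (b s - b t) ⬝ᵥ p t) hGARP
  refine ⟨ζ, fun s t => ?_⟩
  have hst := hζ s t
  rw [sub_dotProduct, dotProduct_comm (b s), dotProduct_comm (b t)] at hst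
  linarith
end
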